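/- Let E = E(I₀,{n_k},{c_k},{ξ_{k,l}}) be a homogeneous perfect set satisfying the gap-comparability condition with constant χ ≥ 1, and let {H_m}_{m≥0} be the decreasing sequence from Lemma 4.1's construction. Then for every k ≥ 1: l(H_{m_k}) = N_k*·δ_k*, and for every m with m_{k−1} < m < m_k, (1 − 2χ/M)·N_{k−1}*·δ_{k−1}* ≤ l(H_m) ≤ N_{k−1}*·δ_{k−1}*. -/

import Mathlib

open Set Filter Metric

noncomputable section

/-- A word `σ = σ₁⋯σ_k` is valid for the branching sequence `n` if `1 ≤ σ_j ≤ n j`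
for every `1 ≤ j ≤ k`.  Words are represented as lists (read with 1-based indices). -/
def ValidWord (n : ℕ → ℕ) (σ : List ℕ) : Prop :=
  ∀ j, j < σ.length → 1 ≤ σ.getD j 0 ∧ σ.getD j 0 ≤ n (j + 1)

/-- The conditions (1)–(4) of Definition 2.1: the family of closed intervals
`I_σ = [a σ, b σ]` (for `σ ∈ D`) has homogeneous perfect structure with parameters
`n`, `c`, `ξ`. -/
structure HPStruct (n : ℕ → ℕ) (c : ℕ → ℝ) (ξ : ℕ → ℕ → ℝ) (a b : List ℕ → ℝ) : Prop where
  /-- each `I_{σ*j}` is a subinterval of `I_σ` -/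
  sub : ∀ σ : List ℕ, ValidWord n σ → ∀ j, 1 ≤ j → j ≤ n (σ.length + 1) →
    Set.Icc (a (σ ++ [j])) (b (σ ++ [j])) ⊆ Set.Icc (a σ) (b σ)
  /-- `min I_{σ*(l+1)} ≥ max I_{σ*l}` -/
  ord : ∀ σ : List ℕ, ValidWord n σ → ∀ l, 1 ≤ l → l + 1 ≤ n (σ.length + 1) →
    b (σ ++ [l]) ≤ a (σ ++ [l + 1])
  /-- `|I_{σ*j}| / |I_σ| = c_k` -/
  ratio : ∀ σ : List ℕ, ValidWord n σ → ∀ j, 1 ≤ j → j ≤ n (σ.length + 1) →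
    b (σ ++ [j]) - a (σ ++ [j]) = c (σ.length + 1) * (b σ - a σ)
  /-- `min I_{σ*1} - min I_σ = ξ_{k,0}` -/
  gap0 : ∀ σ : List ℕ, ValidWord n σ → a (σ ++ [1]) - a σ = ξ (σ.length + 1) 0
  /-- `min I_{σ*(l+1)} - max I_{σ*l} = ξ_{k,l}` -/
  gapl : ∀ σ : List ℕ, ValidWord n σ → ∀ l, 1 ≤ l → l + 1 ≤ n (σ.length + 1) →
    a (σ ++ [l + 1]) - b (σ ++ [l]) = ξ (σ.length + 1) l
  /-- `max I_σ - max I_{σ*n_k} = ξ_{k,n_k}` -/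
  gapn : ∀ σ : List ℕ, ValidWord n σ → b σ - b (σ ++ [n (σ.length + 1)]) =
    ξ (σ.length + 1) (n (σ.length + 1))

/-- A homogeneous perfect set datum `E(I₀, {n_k}, {c_k}, {ξ_{k,l}})` of Definition 2.1:
a nondegenerate initial closed interval `I₀ = [a ∅, b ∅]`, integers `n_k ≥ 2`,
ratios `c_k > 0` with `n_k c_k < 1`, nonnegative gaps `ξ_{k,l}` (`0 ≤ l ≤ n_k`), and a
family of closed intervals `I_σ = [a σ, b σ]` with homogeneous perfect structure. -/
structure HPS where
  n : ℕ → ℕ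
  c : ℕ → ℝ
  ξ : ℕ → ℕ → ℝ
  a : List ℕ → ℝ
  b : List ℕ → ℝ
  hn : ∀ k, 1 ≤ k → 2 ≤ n k
  hc : ∀ k, 1 ≤ k → 0 < c k
  hnc : ∀ k, 1 ≤ k → (n k : ℝ) * c k < 1
  hξ : ∀ k, 1 ≤ k → ∀ l, l ≤ n k → 0 ≤ ξ k l
  hab : a [] < b []
  struct : HPStruct n c ξ a b

namespace HPS

variable (S : HPS)

/-- `E_k`, the union of the `k`-order basic intervals. -/
def Ek (k : ℕ) : Set ℝ :=
  ⋃ σ ∈ {σ : List ℕ | σ.length = k ∧ ValidWord S.n σ}, Set.Icc (S.a σ) (S.b σ)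

/-- The homogeneous perfect set `E = ⋂_k E_k`. -/
def E : Set ℝ := ⋂ k, S.Ek k

/-- Left endpoint of the trimmed interval `I_σ*` (for `σ ∈ D_k`):
`min I_σ* - min I_σ = ξ_{k+1,0}`. -/
def aStar (σ : List ℕ) : ℝ := S.a σ + S.ξ (σ.length + 1) 0

/-- Right endpoint of the trimmed interval `I_σ*`:
`max I_σ - max I_σ* = ξ_{k+1,n_{k+1}}`. -/
def bStar (σ : List ℕ) : ℝ := S.b σ - S.ξ (σ.length + 1) (S.n (σ.length + 1))

/-- `E_k* = ⋃_{σ ∈ D_k} I_σ*`. -/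
def EkStar (k : ℕ) : Set ℝ :=
  ⋃ σ ∈ {σ : List ℕ | σ.length = k ∧ ValidWord S.n σ}, Set.Icc (S.aStar σ) (S.bStar σ)

/-- `δ_k = |I_σ*|` for `σ ∈ D_k` (this common value is computed on the word `1⋯1`). -/
def delta (k : ℕ) : ℝ :=
  S.bStar (List.replicate k 1) - S.aStar (List.replicate k 1)

/-- `c_k* = δ_k / δ_{k-1}`. -/
def cStar (k : ℕ) : ℝ := S.delta k / S.delta (k - 1)

/-- `δ_k* = δ₀ c₁* ⋯ c_k*`. -/
def deltaStar (k : ℕ) : ℝ := S.delta 0 * ∏ j ∈ Finset.Icc 1 k, S.cStar j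

/-- `N_k* = n₁* ⋯ n_k* = n₁ ⋯ n_k`. -/
def Nstar (k : ℕ) : ℕ := ∏ j ∈ Finset.Icc 1 k, S.n j

/-- The reconstructed gap parameters: `ξ*_{k,l} = ξ_{k,l} + ξ_{k+1,0} + ξ_{k+1,n_{k+1}}`
for `1 ≤ l ≤ n_k - 1`, `ξ*_{k,0} = ξ_{k+1,0}`, `ξ*_{k,n_k} = ξ_{k+1,n_{k+1}}`. -/
def xiStar (k l : ℕ) : ℝ :=
  if l = 0 then S.ξ (k + 1) 0
  else if l = S.n k then S.ξ (k + 1) (S.n (k + 1))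
  else S.ξ k l + S.ξ (k + 1) 0 + S.ξ (k + 1) (S.n (k + 1))

/-- `α̲*_k = min_{1 ≤ l ≤ n_k - 1} ξ*_{k,l}`. -/
def alphaLo (k : ℕ) : ℝ := sInf ((fun l => S.xiStar k l) '' Set.Icc 1 (S.n k - 1))

/-- `α̅*_k = max_{1 ≤ l ≤ n_k - 1} ξ*_{k,l}`. -/
def alphaHi (k : ℕ) : ℝ := sSup ((fun l => S.xiStar k l) '' Set.Icc 1 (S.n k - 1))

end HPS

/-- The gap-comparability condition: `max_{1≤l≤n_k-1} ξ_{k,l} ≤ χ · min_{1≤l≤n_k-1} ξ_{k,l}`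
for every `k ≥ 1`. -/
def GapComparable (S : HPS) (χ : ℝ) : Prop :=
  ∀ k, 1 ≤ k → ∀ l l', 1 ≤ l → l ≤ S.n k - 1 → 1 ≤ l' → l' ≤ S.n k - 1 →
    S.ξ k l ≤ χ * S.ξ k l'

/-- `M = ⌊2χ⌋ + 1`. -/
def Mconst (χ : ℝ) : ℕ := ⌊2 * χ⌋₊ + 1

/-- `i_k`: equal to `1` if `n_k < M`, and otherwise the integer with `M^{i_k} ≤ n_k < M^{i_k+1}`. -/
def HPS.ik (S : HPS) (χ : ℝ) (k : ℕ) : ℕ := max 1 (Nat.log (Mconst χ) (S.n k))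

/-- `m_k = i₁ + ⋯ + i_k` (with `m₀ = 0`). -/
def HPS.mIdx (S : HPS) (χ : ℝ) (k : ℕ) : ℕ := ∑ l ∈ Finset.Icc 1 k, S.ik χ l

/-- For `m ≥ 1`, the index `k` with `m_{k-1} < m ≤ m_k`. -/
def HPS.kOf (S : HPS) (χ : ℝ) (m : ℕ) : ℕ := sInf {k | m ≤ S.mIdx χ k}

/-- The data of the sequence `{H_m}` constructed in Lemma 4.1, with its characterizing
properties.  `Br m` is the finite set of branches of `H_m`, a branch being recorded by its
endpoints, and `H_m = ⋃_{p ∈ Br m} [p.1, p.2]`. -/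
structure BranchSeq (S : HPS) (χ : ℝ) where
  Br : ℕ → Finset (ℝ × ℝ)
  /-- each `H_m` has at least one branch -/
  nonempty : ∀ m, (Br m).Nonempty
  /-- branches are nondegenerate closed intervals -/
  lt : ∀ m, ∀ p ∈ Br m, p.1 < p.2
  /-- distinct branches of `H_m` have disjoint interiors -/
  disj : ∀ m, ∀ p ∈ Br m, ∀ q ∈ Br m, p ≠ q →
    Set.Ioo p.1 p.2 ∩ Set.Ioo q.1 q.2 = ∅
  /-- the sequence `H_m` is decreasing under inclusion -/
  dec : ∀ m, (⋃ p ∈ Br (m + 1), Set.Icc p.1 p.2) ⊆ ⋃ p ∈ Br m, Set.Icc p.1 p.2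
  /-- every branch of `H_{m+1}` is contained in a branch of `H_m` -/
  nested : ∀ m, ∀ q ∈ Br (m + 1), ∃ p ∈ Br m, Set.Icc q.1 q.2 ⊆ Set.Icc p.1 p.2
  /-- `E = ⋂_m H_m` -/
  interE : S.E = ⋂ m, ⋃ p ∈ Br m, Set.Icc p.1 p.2
  /-- `H_{m_k} = E_k*`, the branches being exactly the intervals `I_σ*`, `σ ∈ D_k` -/
  levels : ∀ k, (Br (S.mIdx χ k) : Set (ℝ × ℝ)) =
    {p : ℝ × ℝ | ∃ σ : List ℕ, σ.length = k ∧ ValidWord S.n σ ∧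
      p = (S.aStar σ, S.bStar σ)}
  /-- each branch of `H_m` contains at most `M²` branches of `H_{m+1}` -/
  card_le : ∀ m, ∀ p ∈ Br m,
    {q ∈ (Br (m + 1) : Set (ℝ × ℝ)) | Set.Icc q.1 q.2 ⊆ Set.Icc p.1 p.2}.ncard ≤
      (Mconst χ) ^ 2
  /-- for `m_{k-1} < m < m_k`, each branch of `H_{m-1}` contains exactly `M` branches of `H_m` -/
  exactM : ∀ k, 1 ≤ k → ∀ m, S.mIdx χ (k - 1) < m → m < S.mIdx χ k →
    ∀ p ∈ Br (m - 1),
      {q ∈ (Br m : Set (ℝ × ℝ)) | Set.Icc q.1 q.2 ⊆ Set.Icc p.1 p.2}.ncard = Mconst χ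
  /-- for `m_{k-1} < m < m_k`, each branch of `H_m` is the convex hull of a block of
  consecutive intervals `I_σ*`, `σ ∈ D_k`: its endpoints are endpoints of such intervals -/
  hull : ∀ k, 1 ≤ k → ∀ m, S.mIdx χ (k - 1) < m → m < S.mIdx χ k →
    ∀ p ∈ Br m, ∃ σ τ : List ℕ, σ.length = k ∧ τ.length = k ∧
      ValidWord S.n σ ∧ ValidWord S.n τ ∧ p.1 = S.aStar σ ∧ p.2 = S.bStar τ
  /-- `max_{I ∈ H_m} |I| ≤ 2χ · min_{I ∈ H_m} |I|` -/
  comparable : ∀ m, ∀ p ∈ Br m, ∀ q ∈ Br m, p.2 - p.1 ≤ 2 * χ * (q.2 - q.1)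

namespace BranchSeq

variable {S : HPS} {χ : ℝ} (B : BranchSeq S χ)

/-- `l(H_m)`, the total length of the branches of `H_m`. -/
def len (m : ℕ) : ℝ := ∑ p ∈ B.Br m, (p.2 - p.1)

/-- `max_{I branch of H_m} |I|`. -/
def maxLen (m : ℕ) : ℝ :=
  sSup ((fun p : ℝ × ℝ => p.2 - p.1) '' (B.Br m : Set (ℝ × ℝ)))

/-- `min_{I branch of H_m} |I|`. -/
def minLen (m : ℕ) : ℝ :=
  sInf ((fun p : ℝ × ℝ => p.2 - p.1) '' (B.Br m : Set (ℝ × ℝ)))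

/-- `Λ(m) = max {|J|/|I| : I branch of H_{m-1}, J branch of H_m, J ⊆ I}`. -/
def Lam (m : ℕ) : ℝ :=
  sSup {r : ℝ | ∃ p ∈ B.Br (m - 1), ∃ q ∈ B.Br m,
    Set.Icc q.1 q.2 ⊆ Set.Icc p.1 p.2 ∧ r = (q.2 - q.1) / (p.2 - p.1)}

/-- `λ(m) = min {|J|/|I| : I branch of H_{m-1}, J branch of H_m, J ⊆ I}`. -/
def lamSmall (m : ℕ) : ℝ :=
  sInf {r : ℝ | ∃ p ∈ B.Br (m - 1), ∃ q ∈ B.Br m,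
    Set.Icc q.1 q.2 ⊆ Set.Icc p.1 p.2 ∧ r = (q.2 - q.1) / (p.2 - p.1)}

/-- `γ(m) = α̲*_k / max_{I branch of H_{m-1}} |I|`, where `m_{k-1} < m ≤ m_k`. -/
def gam (m : ℕ) : ℝ := S.alphaLo (S.kOf χ m) / B.maxLen (m - 1)

/-- `Γ(m) = α̅*_k / min_{I branch of H_{m-1}} |I|`, where `m_{k-1} < m ≤ m_k`. -/
def Gam (m : ℕ) : ℝ := S.alphaHi (S.kOf χ m) / B.minLen (m - 1)

open Classical in
/-- `S_ε(m) = {j : 1 ≤ j ≤ m, γ(j) ≤ ε}`. -/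
def Sfin (ε : ℝ) (m : ℕ) : Finset ℕ := (Finset.Icc 1 m).filter (fun j => B.gam j ≤ ε)

open Classical in
/-- The branches of `H_{m+1}` contained in the branch `p` of `H_m`. -/
def children (m : ℕ) (p : ℝ × ℝ) : Finset (ℝ × ℝ) :=
  (B.Br (m + 1)).filter (fun q => p.1 ≤ q.1 ∧ q.2 ≤ p.2)

end BranchSeq


/-! ### Auxiliary development for Lemma 4.2 -/

section IntervalCombinatorics

/-- In a family of nondegenerate intervals with pairwise disjoint interiors, every member
other than one with the largest right endpoint lies entirely to the left of it. -/
lemma left_of_rightmost (C : Finset (ℝ × ℝ)) (hlt : ∀ q ∈ C, q.1 < q.2)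
    (hdisj : ∀ q ∈ C, ∀ q' ∈ C, q ≠ q' → Set.Ioo q.1 q.2 ∩ Set.Ioo q'.1 q'.2 = ∅)
    {q0 : ℝ × ℝ} (hq0 : q0 ∈ C) (hmax : ∀ q ∈ C, q.2 ≤ q0.2) :
    ∀ q ∈ C.erase q0, q.2 ≤ q0.1 := by
  intro q hq
  have hqC := Finset.mem_of_mem_erase hq
  have hne' : q ≠ q0 := Finset.ne_of_mem_erase hq
  by_contra hcon
  push_neg at hcon
  have h1 := hlt q hqC
  have h2 := hlt q0 hq0
  have h3 := hmax q hqC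
  have h5 : max q.1 q0.1 < min q.2 q0.2 :=
    max_lt (lt_min h1 (lt_of_lt_of_le h1 h3)) (lt_min hcon h2)
  set t := (max q.1 q0.1 + min q.2 q0.2) / 2 with ht
  have h6 : max q.1 q0.1 < t := by rw [ht]; linarith
  have h7 : t < min q.2 q0.2 := by rw [ht]; linarith
  have hmem : t ∈ Set.Ioo q.1 q.2 ∩ Set.Ioo q0.1 q0.2 :=
    ⟨⟨lt_of_le_of_lt (le_max_left _ _) h6, lt_of_lt_of_le h7 (min_le_left _ _)⟩,
      lt_of_le_of_lt (le_max_right _ _) h6, lt_of_lt_of_le h7 (min_le_right _ _)⟩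
  rw [hdisj q hqC q0 hq0 hne'] at hmem
  exact hmem

/-- Sum of lengths of interior-disjoint subintervals of `[x,y]` is at most `y - x`. -/
lemma sum_len_le (C : Finset (ℝ × ℝ)) : ∀ (x y : ℝ), x ≤ y → (∀ q ∈ C, q.1 < q.2) →
    (∀ q ∈ C, x ≤ q.1 ∧ q.2 ≤ y) →
    (∀ q ∈ C, ∀ q' ∈ C, q ≠ q' → Set.Ioo q.1 q.2 ∩ Set.Ioo q'.1 q'.2 = ∅) →
    ∑ q ∈ C, (q.2 - q.1) ≤ y - x := by
  induction C using Finset.strongInduction with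
  | _ C ih =>
    intro x y hxy hlt hsub hdisj
    rcases C.eq_empty_or_nonempty with rfl | hne
    · simpa using hxy
    · obtain ⟨q0, hq0, hmax⟩ := C.exists_max_image (fun q => q.2) hne
      have hkey := left_of_rightmost C hlt hdisj hq0 hmax
      have hx0 : x ≤ q0.1 := (hsub q0 hq0).1
      have ihe := ih (C.erase q0) (Finset.erase_ssubset hq0) x q0.1 hx0
        (fun q hq => hlt q (Finset.mem_of_mem_erase hq))
        (fun q hq => ⟨(hsub q (Finset.mem_of_mem_erase hq)).1, hkey q hq⟩)
        (fun q hq q' hq' h => hdisj q (Finset.mem_of_mem_erase hq) q'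
          (Finset.mem_of_mem_erase hq') h)
      rw [← Finset.sum_erase_add C _ hq0]
      have := hlt q0 hq0
      have := (hsub q0 hq0).2
      linarith

/-- Splitting estimate: if every open subinterval of `[x,y]` missing all the intervals
of `C` has length at most `α`, then `y - x` exceeds the total length of `C` by at most
`(|C|+1)·α`. -/
lemma len_le_sum (C : Finset (ℝ × ℝ)) : ∀ (x y α : ℝ), x ≤ y → 0 ≤ α →
    (∀ q ∈ C, q.1 < q.2) →
    (∀ q ∈ C, x ≤ q.1 ∧ q.2 ≤ y) →
    (∀ q ∈ C, ∀ q' ∈ C, q ≠ q' → Set.Ioo q.1 q.2 ∩ Set.Ioo q'.1 q'.2 = ∅) →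
    (∀ u v : ℝ, x ≤ u → v ≤ y → u < v →
      (∀ q ∈ C, Set.Ioo u v ∩ Set.Ioo q.1 q.2 = ∅) → v - u ≤ α) →
    y - x ≤ ∑ q ∈ C, (q.2 - q.1) + ((C.card : ℝ) + 1) * α := by
  induction C using Finset.strongInduction with
  | _ C ih =>
    intro x y α hxy hα hlt hsub hdisj hgap
    rcases C.eq_empty_or_nonempty with rfl | hne
    · simp only [Finset.sum_empty, Finset.card_empty, Nat.cast_zero, zero_add, one_mul]
      rcases eq_or_lt_of_le hxy with rfl | hxy'
      · linarith
      · exact hgap x y le_rfl le_rfl hxy' (by simp)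
    · obtain ⟨q0, hq0, hmax⟩ := C.exists_max_image (fun q => q.2) hne
      have hkey := left_of_rightmost C hlt hdisj hq0 hmax
      have hx0 : x ≤ q0.1 := (hsub q0 hq0).1
      have hlt0 := hlt q0 hq0
      have hy0 : q0.2 ≤ y := (hsub q0 hq0).2
      -- right end piece
      have hend : y - q0.2 ≤ α := by
        rcases lt_or_ge q0.2 y with h | h
        · refine hgap q0.2 y (le_trans hx0 hlt0.le) le_rfl h ?_
          intro q hq
          rw [Set.eq_empty_iff_forall_notMem]
          rintro z ⟨⟨hz1, _⟩, _, hz4⟩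
          have := hmax q hq
          linarith
        · linarith
      have ihe := ih (C.erase q0) (Finset.erase_ssubset hq0) x q0.1 α hx0 hα
        (fun q hq => hlt q (Finset.mem_of_mem_erase hq))
        (fun q hq => ⟨(hsub q (Finset.mem_of_mem_erase hq)).1, hkey q hq⟩)
        (fun q hq q' hq' h => hdisj q (Finset.mem_of_mem_erase hq) q'
          (Finset.mem_of_mem_erase hq') h)
        (by
          intro u v hu hv huv hfree
          refine hgap u v hu (le_trans hv (le_trans hlt0.le hy0)) huv ?_
          intro q hq
          rcases eq_or_ne q q0 with rfl | hne'
          · rw [Set.eq_empty_iff_forall_notMem]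
            rintro z ⟨⟨_, hz2⟩, hz3, _⟩
            linarith
          · exact hfree q (Finset.mem_erase.mpr ⟨hne', hq⟩))
      have hcard : ((C.erase q0).card : ℝ) + 1 = (C.card : ℝ) := by
        exact_mod_cast congrArg (Nat.cast (R := ℝ)) (Finset.card_erase_add_one hq0)
      rw [← Finset.sum_erase_add C _ hq0]
      nlinarith [ihe]

lemma Ioo_subset_Ioo_of_Icc {a b c d : ℝ} (h : Set.Icc a b ⊆ Set.Icc c d) :
    Set.Ioo a b ⊆ Set.Ioo c d := by
  have := interior_maximal (Set.Ioo_subset_Icc_self.trans h) isOpen_Ioo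
  rwa [interior_Icc] at this

end IntervalCombinatorics


section HPSGeometry

lemma validWord_nil (n : ℕ → ℕ) : ValidWord n [] := by
  intro j hj
  simp at hj

lemma validWord_append {n : ℕ → ℕ} {σ : List ℕ} {j : ℕ} :
    ValidWord n (σ ++ [j]) ↔ ValidWord n σ ∧ (1 ≤ j ∧ j ≤ n (σ.length + 1)) := by
  constructor
  · intro h
    refine ⟨fun i hi => ?_, ?_⟩
    · have := h i (by simp [List.length_append]; omega)
      rwa [List.getD_append _ _ _ _ hi] at this
    · have := h σ.length (by simp [List.length_append])
      rwa [List.getD_append_right _ _ _ _ le_rfl, Nat.sub_self] at this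
  · rintro ⟨h1, h2, h3⟩ i hi
    simp [List.length_append] at hi
    rcases Nat.lt_or_ge i σ.length with h | h
    · rw [List.getD_append _ _ _ _ h]
      exact h1 i h
    · have hi' : i = σ.length := by omega
      subst hi'
      rw [List.getD_append_right _ _ _ _ le_rfl, Nat.sub_self]
      exact ⟨h2, h3⟩

namespace HPS

variable (S : HPS)

lemma validWord_replicate (k : ℕ) : ValidWord S.n (List.replicate k 1) := by
  intro j hj
  simp only [List.length_replicate] at hj
  rw [List.getD_eq_getElem _ _ (by simpa using hj), List.getElem_replicate]
  exact ⟨le_rfl, by have := S.hn (j + 1) (by omega); omega⟩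

/-- The common length of the basic intervals of level `k`. -/
def P (k : ℕ) : ℝ := (∏ j ∈ Finset.Icc 1 k, S.c j) * (S.b [] - S.a [])

lemma P_pos (k : ℕ) : 0 < S.P k :=
  mul_pos (Finset.prod_pos fun j hj => S.hc j (Finset.mem_Icc.mp hj).1)
    (sub_pos.mpr S.hab)

lemma length_eq : ∀ σ : List ℕ, ValidWord S.n σ → S.b σ - S.a σ = S.P σ.length := by
  intro σ
  induction σ using List.reverseRecOn with
  | nil =>
    intro _
    simp [P]
  | append_singleton σ j ihσ =>
    intro hv
    obtain ⟨hσ, hj1, hj2⟩ := validWord_append.mp hv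
    rw [S.struct.ratio σ hσ j hj1 hj2, ihσ hσ]
    simp only [List.length_append, List.length_singleton]
    rw [P, P, Finset.prod_Icc_succ_top (by omega : 1 ≤ σ.length + 1)]
    ring

lemma length_pos {σ : List ℕ} (hσ : ValidWord S.n σ) : 0 < S.b σ - S.a σ := by
  rw [S.length_eq σ hσ]; exact S.P_pos _

lemma b_le_b {σ : List ℕ} (hσ : ValidWord S.n σ) {i : ℕ} (h1 : 1 ≤ i) :
    ∀ j, i ≤ j → j ≤ S.n (σ.length + 1) → S.b (σ ++ [i]) ≤ S.b (σ ++ [j]) := by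
  intro j hij
  induction j, hij using Nat.le_induction with
  | base => intro _; exact le_rfl
  | succ j hij ih =>
    intro hj
    have h1j : 1 ≤ j := le_trans h1 hij
    have hord := S.struct.ord σ hσ j h1j hj
    have hlen := S.length_pos (σ := σ ++ [j + 1])
      (validWord_append.mpr ⟨hσ, by omega, hj⟩)
    have := ih (by omega)
    linarith

lemma b_le_a {σ : List ℕ} (hσ : ValidWord S.n σ) {i j : ℕ} (h1 : 1 ≤ i) (hij : i < j)
    (hj : j ≤ S.n (σ.length + 1)) : S.b (σ ++ [i]) ≤ S.a (σ ++ [j]) := by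
  have h2 : S.b (σ ++ [i]) ≤ S.b (σ ++ [j - 1]) :=
    S.b_le_b hσ h1 (j - 1) (by omega) (by omega)
  have hord := S.struct.ord σ hσ (j - 1) (by omega) (by omega)
  rw [Nat.sub_add_cancel (by omega : 1 ≤ j)] at hord
  linarith

lemma a_le_a {σ : List ℕ} (hσ : ValidWord S.n σ) {i j : ℕ} (h1 : 1 ≤ i) (hij : i ≤ j)
    (hj : j ≤ S.n (σ.length + 1)) : S.a (σ ++ [i]) ≤ S.a (σ ++ [j]) := by
  rcases eq_or_lt_of_le hij with rfl | h
  · exact le_rfl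
  · have := S.b_le_a hσ h1 h hj
    have := S.length_pos (σ := σ ++ [i]) (validWord_append.mpr ⟨hσ, h1, by omega⟩)
    linarith

lemma aStar_eq {σ : List ℕ} (hσ : ValidWord S.n σ) : S.aStar σ = S.a (σ ++ [1]) := by
  have := S.struct.gap0 σ hσ
  rw [aStar]; linarith

lemma bStar_eq {σ : List ℕ} (hσ : ValidWord S.n σ) :
    S.bStar σ = S.b (σ ++ [S.n (σ.length + 1)]) := by
  have := S.struct.gapn σ hσ
  rw [bStar]; linarith

lemma star_diff {σ : List ℕ} (hσ : ValidWord S.n σ) :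
    S.bStar σ - S.aStar σ =
      S.P σ.length - S.ξ (σ.length + 1) 0 - S.ξ (σ.length + 1) (S.n (σ.length + 1)) := by
  have := S.length_eq σ hσ
  rw [aStar, bStar]; linarith

lemma delta_eq_P (k : ℕ) :
    S.delta k = S.P k - S.ξ (k + 1) 0 - S.ξ (k + 1) (S.n (k + 1)) := by
  rw [delta, S.star_diff (S.validWord_replicate k), List.length_replicate]

lemma delta_len {σ : List ℕ} (hσ : ValidWord S.n σ) :
    S.bStar σ - S.aStar σ = S.delta σ.length := by
  rw [S.star_diff hσ, S.delta_eq_P]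

lemma delta_pos (k : ℕ) : 0 < S.delta k := by
  set σ := List.replicate k 1 with hσdef
  have hσ := S.validWord_replicate k
  have hlen : σ.length = k := List.length_replicate
  have hn2 : 2 ≤ S.n (k + 1) := S.hn (k + 1) (by omega)
  have h1 : S.aStar σ = S.a (σ ++ [1]) := S.aStar_eq hσ
  have h2 : S.bStar σ = S.b (σ ++ [S.n (σ.length + 1)]) := S.bStar_eq hσ
  have h3 : S.b (σ ++ [1]) ≤ S.b (σ ++ [S.n (σ.length + 1)]) :=
    S.b_le_b hσ le_rfl _ (by rw [hlen]; omega) le_rfl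
  have h4 : 0 < S.b (σ ++ [1]) - S.a (σ ++ [1]) :=
    S.length_pos (validWord_append.mpr ⟨hσ, le_rfl, by rw [hlen]; omega⟩)
  have : 0 < S.bStar σ - S.aStar σ := by rw [h1, h2]; linarith
  rwa [S.delta_len hσ, hlen] at this

lemma deltaStar_eq (k : ℕ) : S.deltaStar k = S.delta k := by
  induction k with
  | zero => simp [deltaStar]
  | succ k ih =>
    rw [deltaStar, Finset.prod_Icc_succ_top (by omega : 1 ≤ k + 1), ← mul_assoc,
      ← deltaStar, ih, cStar]
    simp only [Nat.add_sub_cancel]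
    rw [mul_comm, div_mul_cancel₀ _ (ne_of_gt (S.delta_pos k))]

lemma delta_expand (k : ℕ) :
    S.delta k = (∑ l ∈ Finset.Icc 1 (S.n (k + 1) - 1), S.ξ (k + 1) l) +
      (S.n (k + 1) : ℝ) * S.P (k + 1) := by
  set ω := List.replicate k 1 with hωdef
  have hω := S.validWord_replicate k
  have hlen : ω.length = k := List.length_replicate
  set n := S.n (k + 1) with hndef
  have hn2 : 2 ≤ n := S.hn (k + 1) (by omega)
  have key : ∀ l, 1 ≤ l → l + 1 ≤ n →
      S.a (ω ++ [l + 1]) - S.a (ω ++ [l]) = S.ξ (k + 1) l + S.P (k + 1) := by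
    intro l h1 h2
    have hgapl := S.struct.gapl ω hω l h1 (by rw [hlen]; omega)
    rw [hlen] at hgapl
    have hl := S.length_eq (ω ++ [l]) (validWord_append.mpr ⟨hω, h1, by rw [hlen]; omega⟩)
    simp only [List.length_append, List.length_singleton, hlen] at hl
    linarith
  have tel : ∀ t, t ≤ n - 1 →
      S.a (ω ++ [t + 1]) - S.a (ω ++ [1]) =
        ∑ l ∈ Finset.Icc 1 t, (S.ξ (k + 1) l + S.P (k + 1)) := by
    intro t
    induction t with
    | zero => intro _; simp
    | succ t ih =>
      intro ht
      have hkey := key (t + 1) (by omega) (by omega)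
      have hih := ih (by omega)
      rw [Finset.sum_Icc_succ_top (by omega : 1 ≤ t + 1), ← hih]
      linarith
  have hd : S.delta k = S.b (ω ++ [n]) - S.a (ω ++ [1]) := by
    have h := S.delta_len hω
    rw [S.aStar_eq hω, S.bStar_eq hω, List.length_replicate] at h
    rw [hωdef, hndef]
    exact h.symm
  have hbn := S.length_eq (ω ++ [n]) (validWord_append.mpr ⟨hω, by omega, by rw [hlen]⟩)
  simp only [List.length_append, List.length_singleton, hlen] at hbn
  have htel := tel (n - 1) le_rfl
  rw [Nat.sub_add_cancel (by omega : 1 ≤ n)] at htel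
  rw [Finset.sum_add_distrib, Finset.sum_const, Nat.card_Icc] at htel
  simp only [Nat.add_sub_cancel] at htel
  rw [nsmul_eq_mul, Nat.cast_sub (by omega : 1 ≤ n)] at htel
  rw [hd]
  push_cast at htel ⊢
  linarith

lemma Ioo_disj : ∀ (L : ℕ) (σ τ : List ℕ), σ.length = L → τ.length = L →
    ValidWord S.n σ → ValidWord S.n τ → σ ≠ τ →
    Set.Ioo (S.a σ) (S.b σ) ∩ Set.Ioo (S.a τ) (S.b τ) = ∅ := by
  intro L
  induction L with
  | zero =>
    intro σ τ hσl hτl _ _ hne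
    rw [List.length_eq_zero_iff] at hσl hτl
    subst hσl; subst hτl
    exact absurd rfl hne
  | succ L ih =>
    intro σ τ hσl hτl hvσ hvτ hne
    rcases σ.eq_nil_or_concat' with rfl | ⟨σ', i, rfl⟩
    · simp at hσl
    rcases τ.eq_nil_or_concat' with rfl | ⟨τ', j, rfl⟩
    · simp at hτl
    obtain ⟨hvσ', hi1, hi2⟩ := validWord_append.mp hvσ
    obtain ⟨hvτ', hj1, hj2⟩ := validWord_append.mp hvτ
    simp only [List.length_append, List.length_singleton] at hσl hτl
    have hσ'l : σ'.length = L := by omega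
    have hτ'l : τ'.length = L := by omega
    by_cases hst : σ' = τ'
    · subst hst
      have hij : i ≠ j := by rintro rfl; exact hne rfl
      have key : ∀ i j : ℕ, 1 ≤ i → i < j → j ≤ S.n (σ'.length + 1) →
          Set.Ioo (S.a (σ' ++ [i])) (S.b (σ' ++ [i])) ∩
            Set.Ioo (S.a (σ' ++ [j])) (S.b (σ' ++ [j])) = ∅ := by
        intro i j h1 hij hj
        have hba := S.b_le_a hvσ' h1 hij hj
        rw [Set.eq_empty_iff_forall_notMem]
        rintro z ⟨⟨_, hz2⟩, hz3, _⟩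
        linarith
      rcases lt_or_gt_of_ne hij with h | h
      · exact key i j hi1 h hj2
      · rw [Set.inter_comm]; exact key j i hj1 h hi2
    · have hdisj' := ih σ' τ' hσ'l hτ'l hvσ' hvτ' hst
      have h1 : Set.Ioo (S.a (σ' ++ [i])) (S.b (σ' ++ [i])) ⊆
          Set.Ioo (S.a σ') (S.b σ') :=
        Ioo_subset_Ioo_of_Icc (S.struct.sub σ' hvσ' i hi1 hi2)
      have h2 : Set.Ioo (S.a (τ' ++ [j])) (S.b (τ' ++ [j])) ⊆
          Set.Ioo (S.a τ') (S.b τ') :=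
        Ioo_subset_Ioo_of_Icc (S.struct.sub τ' hvτ' j hj1 hj2)
      rw [← Set.subset_empty_iff, ← hdisj']
      exact Set.inter_subset_inter h1 h2

lemma star_le {σ : List ℕ} : S.a σ ≤ S.aStar σ ∧ S.bStar σ ≤ S.b σ := by
  constructor
  · rw [aStar]
    have := S.hξ (σ.length + 1) (by omega) 0 (Nat.zero_le _)
    linarith
  · rw [bStar]
    have := S.hξ (σ.length + 1) (by omega) (S.n (σ.length + 1)) le_rfl
    linarith

lemma star_inj {k : ℕ} {σ τ : List ℕ} (hσl : σ.length = k) (hτl : τ.length = k)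
    (hvσ : ValidWord S.n σ) (hvτ : ValidWord S.n τ)
    (h : (S.aStar σ, S.bStar σ) = (S.aStar τ, S.bStar τ)) : σ = τ := by
  by_contra hne
  have hd := S.Ioo_disj k σ τ hσl hτl hvσ hvτ hne
  have hpos : S.aStar σ < S.bStar σ := by
    have h1 := S.delta_len hvσ
    have h2 := S.delta_pos σ.length
    linarith
  set t := (S.aStar σ + S.bStar σ) / 2 with htdef
  have ht : t ∈ Set.Ioo (S.aStar σ) (S.bStar σ) := by
    constructor <;> (rw [htdef]; linarith)
  have h1 : t ∈ Set.Ioo (S.a σ) (S.b σ) :=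
    Set.Ioo_subset_Ioo S.star_le.1 S.star_le.2 ht
  have h2 : t ∈ Set.Ioo (S.a τ) (S.b τ) := by
    refine Set.Ioo_subset_Ioo S.star_le.1 S.star_le.2 ?_
    have e1 : S.aStar σ = S.aStar τ := congrArg Prod.fst h
    have e2 : S.bStar σ = S.bStar τ := congrArg Prod.snd h
    rw [← e1, ← e2]
    exact ht
  rw [Set.eq_empty_iff_forall_notMem] at hd
  exact hd t ⟨h1, h2⟩

lemma xiStar_middle {k l : ℕ} (hk : 1 ≤ k) (h1 : 1 ≤ l) (h2 : l ≤ S.n k - 1) :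
    S.xiStar k l = S.ξ k l + S.ξ (k + 1) 0 + S.ξ (k + 1) (S.n (k + 1)) := by
  have hn2 : 2 ≤ S.n k := S.hn k hk
  rw [xiStar, if_neg (by omega), if_neg (by omega)]

lemma xiStar_middle_nonneg {k l : ℕ} (hk : 1 ≤ k) (h1 : 1 ≤ l) (h2 : l ≤ S.n k - 1) :
    0 ≤ S.xiStar k l := by
  have hn2 : 2 ≤ S.n k := S.hn k hk
  rw [S.xiStar_middle hk h1 h2]
  have e0 := S.hξ k hk l (by omega)
  have e1 := S.hξ (k + 1) (by omega) 0 (Nat.zero_le _)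
  have e2 := S.hξ (k + 1) (by omega) (S.n (k + 1)) le_rfl
  linarith

lemma le_alphaHi {k l : ℕ} (hk : 1 ≤ k) (h1 : 1 ≤ l) (h2 : l ≤ S.n k - 1) :
    S.xiStar k l ≤ S.alphaHi k := by
  refine le_csSup ?_ ⟨l, ⟨h1, h2⟩, rfl⟩
  exact ((Set.finite_Icc 1 (S.n k - 1)).image _).bddAbove

lemma alphaHi_nonneg {k : ℕ} (hk : 1 ≤ k) : 0 ≤ S.alphaHi k := by
  have hn2 : 2 ≤ S.n k := S.hn k hk
  exact le_trans (S.xiStar_middle_nonneg hk le_rfl (by omega))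
    (S.le_alphaHi hk le_rfl (by omega))

lemma alphaHi_le {χ : ℝ} (hχ : 1 ≤ χ) (hgap : GapComparable S χ) {k l' : ℕ}
    (hk : 1 ≤ k) (h1 : 1 ≤ l') (h2 : l' ≤ S.n k - 1) :
    S.alphaHi k ≤ χ * S.xiStar k l' := by
  have hn2 : 2 ≤ S.n k := S.hn k hk
  refine csSup_le ⟨S.xiStar k 1, 1, ⟨le_rfl, by omega⟩, rfl⟩ ?_
  rintro x ⟨l, ⟨hl1, hl2⟩, rfl⟩
  show S.xiStar k l ≤ χ * S.xiStar k l'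
  rw [S.xiStar_middle hk hl1 hl2, S.xiStar_middle hk h1 h2]
  have hgl := hgap k hk l l' hl1 hl2 h1 h2
  have e1 := S.hξ (k + 1) (by omega) 0 (Nat.zero_le _)
  have e2 := S.hξ (k + 1) (by omega) (S.n (k + 1)) le_rfl
  nlinarith

lemma alphaHi_card_le {χ : ℝ} (hχ : 1 ≤ χ) (hgap : GapComparable S χ) {k : ℕ}
    (hk : 1 ≤ k) : ((S.n k - 1 : ℕ) : ℝ) * S.alphaHi k ≤ χ * S.delta (k - 1) := by
  have hn2 : 2 ≤ S.n k := S.hn k hk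
  have hsum : ∑ l ∈ Finset.Icc 1 (S.n k - 1), S.alphaHi k ≤
      ∑ l ∈ Finset.Icc 1 (S.n k - 1), χ * S.xiStar k l := by
    refine Finset.sum_le_sum fun l hl => ?_
    obtain ⟨h1, h2⟩ := Finset.mem_Icc.mp hl
    exact S.alphaHi_le hχ hgap hk h1 h2
  rw [Finset.sum_const, Nat.card_Icc, nsmul_eq_mul, ← Finset.mul_sum] at hsum
  simp only [Nat.add_sub_cancel] at hsum
  have hxs : ∑ l ∈ Finset.Icc 1 (S.n k - 1), S.xiStar k l ≤ S.delta (k - 1) := by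
    have hexp := S.delta_expand (k - 1)
    rw [Nat.sub_add_cancel hk] at hexp
    have hmid : ∀ l ∈ Finset.Icc 1 (S.n k - 1), S.xiStar k l =
        S.ξ k l + (S.ξ (k + 1) 0 + S.ξ (k + 1) (S.n (k + 1))) := by
      intro l hl
      obtain ⟨h1, h2⟩ := Finset.mem_Icc.mp hl
      rw [S.xiStar_middle hk h1 h2]; ring
    have heq : ∑ l ∈ Finset.Icc 1 (S.n k - 1), S.xiStar k l =
        (∑ l ∈ Finset.Icc 1 (S.n k - 1), S.ξ k l) +
          ((S.n k - 1 : ℕ) : ℝ) * (S.ξ (k + 1) 0 + S.ξ (k + 1) (S.n (k + 1))) := by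
      rw [Finset.sum_congr rfl hmid, Finset.sum_add_distrib, Finset.sum_const,
        Nat.card_Icc, nsmul_eq_mul]
      simp only [Nat.add_sub_cancel]
    rw [heq, hexp]
    have hPe : S.P k = S.delta k + (S.ξ (k + 1) 0 + S.ξ (k + 1) (S.n (k + 1))) := by
      have := S.delta_eq_P k; linarith
    have hdp := S.delta_pos k
    have e1 := S.hξ (k + 1) (by omega) 0 (Nat.zero_le _)
    have e2 := S.hξ (k + 1) (by omega) (S.n (k + 1)) le_rfl
    have hcast : ((S.n k - 1 : ℕ) : ℝ) = (S.n k : ℝ) - 1 := by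
      rw [Nat.cast_sub (by omega)]; norm_num
    have hn0 : (0:ℝ) ≤ (S.n k : ℝ) := Nat.cast_nonneg _
    rw [hcast, hPe]
    nlinarith
  have hα := S.alphaHi_nonneg hk
  calc ((S.n k - 1 : ℕ) : ℝ) * S.alphaHi k ≤
      χ * ∑ l ∈ Finset.Icc 1 (S.n k - 1), S.xiStar k l := hsum
    _ ≤ χ * S.delta (k - 1) := by
        have hχ0 : (0:ℝ) ≤ χ := by linarith
        exact mul_le_mul_of_nonneg_left hxs hχ0

/-- Key avoidance estimate: an open interval inside `I_ω*` missing the interiors of all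
the trimmed children `I_{ω*l}*` has length at most `α̅*_k`, `k = |ω| + 1`. -/
lemma avoid {ω : List ℕ} (hω : ValidWord S.n ω) {u v : ℝ}
    (hu : S.aStar ω ≤ u) (hv : v ≤ S.bStar ω)
    (hd : ∀ l, 1 ≤ l → l ≤ S.n (ω.length + 1) →
      Set.Ioo u v ∩ Set.Ioo (S.aStar (ω ++ [l])) (S.bStar (ω ++ [l])) = ∅) :
    v - u ≤ S.alphaHi (ω.length + 1) := by
  set k := ω.length + 1 with hkdef
  have hk1 : 1 ≤ k := by omega
  have hn2 : 2 ≤ S.n k := S.hn k hk1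
  have hαnn := S.alphaHi_nonneg hk1
  rcases le_or_gt v u with h | huv
  · linarith
  have hclen : ∀ l, 1 ≤ l → l ≤ S.n k → (ω ++ [l]).length = k := by
    intro l _ _; simp [hkdef]
  have hcval : ∀ l, 1 ≤ l → l ≤ S.n k → ValidWord S.n (ω ++ [l]) := by
    intro l h1 h2
    exact validWord_append.mpr ⟨hω, h1, by rw [← hkdef]; exact h2⟩
  have hstar : ∀ l, 1 ≤ l → l ≤ S.n k → S.aStar (ω ++ [l]) < S.bStar (ω ++ [l]) := by
    intro l h1 h2
    have := S.delta_len (hcval l h1 h2)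
    have := S.delta_pos ((ω ++ [l]).length)
    linarith
  have split : ∀ l, 1 ≤ l → l ≤ S.n k →
      v ≤ S.aStar (ω ++ [l]) ∨ S.bStar (ω ++ [l]) ≤ u := by
    intro l h1 h2
    by_contra hcon
    push_neg at hcon
    obtain ⟨ha, hb⟩ := hcon
    have hlt := hstar l h1 h2
    have h5 : max u (S.aStar (ω ++ [l])) < min v (S.bStar (ω ++ [l])) :=
      max_lt (lt_min huv hb) (lt_min ha hlt)
    set t := (max u (S.aStar (ω ++ [l])) + min v (S.bStar (ω ++ [l]))) / 2 with htd
    have h6 : max u (S.aStar (ω ++ [l])) < t := by rw [htd]; linarith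
    have h7 : t < min v (S.bStar (ω ++ [l])) := by rw [htd]; linarith
    have hmem : t ∈ Set.Ioo u v ∩ Set.Ioo (S.aStar (ω ++ [l])) (S.bStar (ω ++ [l])) :=
      ⟨⟨lt_of_le_of_lt (le_max_left _ _) h6, lt_of_lt_of_le h7 (min_le_left _ _)⟩,
        lt_of_le_of_lt (le_max_right _ _) h6, lt_of_lt_of_le h7 (min_le_right _ _)⟩
    rw [hd l h1 h2] at hmem
    exact hmem
  have hξnn1 : 0 ≤ S.ξ (k + 1) 0 := S.hξ (k + 1) (by omega) 0 (Nat.zero_le _)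
  have hξnn2 : 0 ≤ S.ξ (k + 1) (S.n (k + 1)) := S.hξ (k + 1) (by omega) _ le_rfl
  have hξnn3 : 0 ≤ S.ξ k 1 := S.hξ k hk1 1 (by omega)
  have hxi1 : S.xiStar k 1 ≤ S.alphaHi k := S.le_alphaHi hk1 le_rfl (by omega)
  have hxi1e := S.xiStar_middle (l := 1) hk1 le_rfl (by omega)
  have haS : ∀ l, 1 ≤ l → l ≤ S.n k →
      S.aStar (ω ++ [l]) = S.a (ω ++ [l]) + S.ξ (k + 1) 0 := by
    intro l h1 h2
    rw [aStar, hclen l h1 h2]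
  have hbS : ∀ l, 1 ≤ l → l ≤ S.n k →
      S.bStar (ω ++ [l]) = S.b (ω ++ [l]) - S.ξ (k + 1) (S.n (k + 1)) := by
    intro l h1 h2
    rw [bStar, hclen l h1 h2]
  set T := {l : ℕ | 1 ≤ l ∧ l ≤ S.n k ∧ v ≤ S.aStar (ω ++ [l])} with hTdef
  by_cases hT : T.Nonempty
  · set l₀ := sInf T with hl₀def
    obtain ⟨hl₀1, hl₀2, hl₀v⟩ : l₀ ∈ T := Nat.sInf_mem hT
    rcases eq_or_lt_of_le hl₀1 with h | h
    · -- l₀ = 1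
      have hv1 : v ≤ S.aStar (ω ++ [1]) := by rw [h]; exact hl₀v
      have hu1 : S.a (ω ++ [1]) ≤ u := by
        rw [← S.aStar_eq hω, ← hkdef] at *
        exact hu
      have := haS 1 le_rfl (by omega)
      rw [hxi1e] at hxi1
      linarith [hv1, hu1]
    · -- l₀ ≥ 2
      have h1' : 1 ≤ l₀ - 1 := by omega
      have hnotT : l₀ - 1 ∉ T := Nat.notMem_of_lt_sInf (by omega)
      have h2' : l₀ - 1 ≤ S.n k := by omega
      have hb' : S.bStar (ω ++ [l₀ - 1]) ≤ u := by
        rcases split (l₀ - 1) h1' h2' with hc | hc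
        · exact absurd ⟨h1', h2', hc⟩ hnotT
        · exact hc
      have egap : S.a (ω ++ [l₀]) - S.b (ω ++ [l₀ - 1]) = S.ξ k (l₀ - 1) := by
        have hg := S.struct.gapl ω hω (l₀ - 1) h1'
          (by rw [← hkdef]; omega)
        rw [Nat.sub_add_cancel (by omega : 1 ≤ l₀), ← hkdef] at hg
        exact hg
      have hxm := S.xiStar_middle (l := l₀ - 1) hk1 h1' (by omega)
      have hxa : S.xiStar k (l₀ - 1) ≤ S.alphaHi k := S.le_alphaHi hk1 h1' (by omega)
      have e1 := haS l₀ hl₀1 hl₀2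
      have e2 := hbS (l₀ - 1) h1' h2'
      linarith [hl₀v, hb']
  · -- T empty : everything is to the left of u
    have hun : S.bStar (ω ++ [S.n k]) ≤ u := by
      rcases split (S.n k) (by omega) le_rfl with hc | hc
      · exact absurd (⟨S.n k, ⟨by omega, le_rfl, hc⟩⟩ : T.Nonempty) hT
      · exact hc
    have e1 : S.bStar ω = S.b (ω ++ [S.n k]) := by
      have := S.bStar_eq hω
      rwa [← hkdef] at this
    have e2 := hbS (S.n k) (by omega) le_rfl
    rw [hxi1e] at hxi1
    linarith [hun, hv]

end HPS

/-- The finset of valid words of length `k`. -/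
def HPS.Wd (S : HPS) : ℕ → Finset (List ℕ)
  | 0 => {[]}
  | (k+1) => ((S.Wd k) ×ˢ Finset.Icc 1 (S.n (k+1))).image fun x => x.1 ++ [x.2]

namespace HPS

lemma mem_Wd (S : HPS) : ∀ {k : ℕ} {σ : List ℕ},
    σ ∈ S.Wd k ↔ σ.length = k ∧ ValidWord S.n σ := by
  intro k
  induction k with
  | zero =>
    intro σ
    simp only [Wd, Finset.mem_singleton]
    constructor
    · rintro rfl; exact ⟨rfl, validWord_nil _⟩
    · rintro ⟨h, _⟩; exact List.length_eq_zero_iff.mp h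
  | succ k ih =>
    intro σ
    simp only [Wd, Finset.mem_image, Finset.mem_product, Finset.mem_Icc]
    constructor
    · rintro ⟨⟨σ', j⟩, ⟨hσ', hj⟩, rfl⟩
      obtain ⟨hl, hv⟩ := ih.mp hσ'
      refine ⟨by simp [hl], validWord_append.mpr ⟨hv, hj.1, ?_⟩⟩
      rw [hl]; exact hj.2
    · rintro ⟨hl, hv⟩
      rcases σ.eq_nil_or_concat' with rfl | ⟨σ', j, rfl⟩
      · simp at hl
      obtain ⟨hv', hj1, hj2⟩ := validWord_append.mp hv
      have hl' : σ'.length = k := by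
        simp only [List.length_append, List.length_singleton] at hl; omega
      refine ⟨(σ', j), ⟨ih.mpr ⟨hl', hv'⟩, hj1, ?_⟩, rfl⟩
      rwa [hl'] at hj2

lemma card_Wd (S : HPS) (k : ℕ) : (S.Wd k).card = S.Nstar k := by
  induction k with
  | zero => simp [Wd, Nstar]
  | succ k ih =>
    have hinj : Set.InjOn (fun x : List ℕ × ℕ => x.1 ++ [x.2])
        (((((S.Wd k) ×ˢ Finset.Icc 1 (S.n (k+1))) : Finset (List ℕ × ℕ))) :
          Set (List ℕ × ℕ)) := by
      rintro ⟨σ, i⟩ h1 ⟨τ, j⟩ h2 heq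
      simp only at heq
      have hlen : σ.length = τ.length := by
        have := congrArg List.length heq
        simp only [List.length_append, List.length_singleton] at this
        omega
      obtain ⟨h, h'⟩ := List.append_inj heq hlen
      simp only [List.cons.injEq] at h'
      exact Prod.ext h h'.1
    show ((S.Wd k ×ˢ Finset.Icc 1 (S.n (k+1))).image fun x => x.1 ++ [x.2]).card = _
    rw [Finset.card_image_of_injOn hinj, Finset.card_product, Nat.card_Icc, ih]
    rw [Nstar, Nstar, Finset.prod_Icc_succ_top (by omega : 1 ≤ k + 1)]
    simp

end HPS

end HPSGeometry




section BranchLemmas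

namespace BranchSeq

variable {S : HPS} {χ : ℝ} (B : BranchSeq S χ)

lemma exists_ancestor {m m' : ℕ} (h : m ≤ m') :
    ∀ q ∈ B.Br m', ∃ p ∈ B.Br m, Set.Icc q.1 q.2 ⊆ Set.Icc p.1 p.2 := by
  induction m', h using Nat.le_induction with
  | base => exact fun q hq => ⟨q, hq, subset_rfl⟩
  | succ m' hm ih =>
    intro q hq
    obtain ⟨r, hr, hsub⟩ := B.nested m' q hq
    obtain ⟨p, hp, hsub'⟩ := ih r hr
    exact ⟨p, hp, hsub.trans hsub'⟩

lemma sub_endpoints {p q : ℝ × ℝ} (hq : q.1 < q.2)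
    (h : Set.Icc q.1 q.2 ⊆ Set.Icc p.1 p.2) : p.1 ≤ q.1 ∧ q.2 ≤ p.2 :=
  ⟨(h ⟨le_rfl, hq.le⟩).1, (h ⟨hq.le, le_rfl⟩).2⟩

lemma mem_children {m : ℕ} {p q : ℝ × ℝ} :
    q ∈ B.children m p ↔ q ∈ B.Br (m + 1) ∧ p.1 ≤ q.1 ∧ q.2 ≤ p.2 := by
  classical
  simp [children]

lemma children_pairwise_disjoint (m : ℕ) {p p' : ℝ × ℝ} (hp : p ∈ B.Br m)
    (hp' : p' ∈ B.Br m) (hne : p ≠ p') :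
    Disjoint (B.children m p) (B.children m p') := by
  rw [Finset.disjoint_left]
  intro q hq hq'
  obtain ⟨hqm, h1, h2⟩ := B.mem_children.mp hq
  obtain ⟨_, h1', h2'⟩ := B.mem_children.mp hq'
  have hqlt := B.lt (m + 1) q hqm
  set t := (q.1 + q.2) / 2 with htd
  have ht : t ∈ Set.Ioo p.1 p.2 ∩ Set.Ioo p'.1 p'.2 := by
    constructor <;> (constructor <;> (rw [htd]; first | linarith | linarith))
  rw [B.disj m p hp p' hp' hne] at ht
  exact ht

lemma children_biUnion (m : ℕ) : (B.Br m).biUnion (B.children m) = B.Br (m + 1) := by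
  classical
  ext q
  simp only [Finset.mem_biUnion]
  constructor
  · rintro ⟨p, _, hq⟩
    exact (B.mem_children.mp hq).1
  · intro hq
    obtain ⟨p, hp, hsub⟩ := B.nested m q hq
    obtain ⟨h1, h2⟩ := sub_endpoints (B.lt (m + 1) q hq) hsub
    exact ⟨p, hp, B.mem_children.mpr ⟨hq, h1, h2⟩⟩

lemma len_succ (m : ℕ) :
    B.len (m + 1) = ∑ p ∈ B.Br m, ∑ q ∈ B.children m p, (q.2 - q.1) := by
  classical
  rw [len, ← B.children_biUnion m, Finset.sum_biUnion]
  intro p hp p' hp' hne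
  exact B.children_pairwise_disjoint m (by simpa using hp) (by simpa using hp') hne

lemma card_succ (m : ℕ) :
    (B.Br (m + 1)).card = ∑ p ∈ B.Br m, (B.children m p).card := by
  classical
  rw [← B.children_biUnion m, Finset.card_biUnion]
  intro p hp p' hp' hne
  exact B.children_pairwise_disjoint m hp hp' hne

lemma children_sum_le (m : ℕ) {p : ℝ × ℝ} (hp : p ∈ B.Br m) :
    ∑ q ∈ B.children m p, (q.2 - q.1) ≤ p.2 - p.1 := by
  refine sum_len_le _ p.1 p.2 (B.lt m p hp).le
    (fun q hq => B.lt (m + 1) q (B.mem_children.mp hq).1)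
    (fun q hq => (B.mem_children.mp hq).2)
    (fun q hq q' hq' h =>
      B.disj (m + 1) q (B.mem_children.mp hq).1 q' (B.mem_children.mp hq').1 h)

lemma len_succ_le (m : ℕ) : B.len (m + 1) ≤ B.len m := by
  rw [B.len_succ m, len]
  exact Finset.sum_le_sum fun p hp => B.children_sum_le m hp

lemma len_mono {m m' : ℕ} (h : m ≤ m') : B.len m' ≤ B.len m := by
  induction m', h using Nat.le_induction with
  | base => exact le_rfl
  | succ m' hm ih => exact le_trans (B.len_succ_le m') ih

/-- Part 1 of Lemma 4.2: the level sets. -/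
lemma len_level (k : ℕ) :
    B.len (S.mIdx χ k) = (S.Nstar k : ℝ) * S.delta k ∧
      (B.Br (S.mIdx χ k)).card = S.Nstar k := by
  have hset : (B.Br (S.mIdx χ k) : Set (ℝ × ℝ)) =
      (fun σ => (S.aStar σ, S.bStar σ)) '' (S.Wd k : Set (List ℕ)) := by
    rw [B.levels k]
    ext p
    constructor
    · rintro ⟨σ, h1, h2, h3⟩
      exact ⟨σ, by rw [Finset.mem_coe, S.mem_Wd]; exact ⟨h1, h2⟩, h3.symm⟩
    · rintro ⟨σ, hσ, rfl⟩
      rw [Finset.mem_coe, S.mem_Wd] at hσ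
      exact ⟨σ, hσ.1, hσ.2, rfl⟩
  have hinj : Set.InjOn (fun σ => (S.aStar σ, S.bStar σ)) (S.Wd k : Set (List ℕ)) := by
    intro σ hσ τ hτ h
    rw [Finset.mem_coe, S.mem_Wd] at hσ hτ
    exact S.star_inj hσ.1 hτ.1 hσ.2 hτ.2 h
  have hcard : (B.Br (S.mIdx χ k)).card = S.Nstar k := by
    rw [← Set.ncard_coe_finset, hset, Set.ncard_image_of_injOn hinj,
      Set.ncard_coe_finset, S.card_Wd]
  refine ⟨?_, hcard⟩
  rw [len]
  have hval : ∀ p ∈ B.Br (S.mIdx χ k), p.2 - p.1 = S.delta k := by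
    intro p hp
    have hp' : p ∈ (B.Br (S.mIdx χ k) : Set (ℝ × ℝ)) := hp
    rw [B.levels k] at hp'
    obtain ⟨σ, h1, h2, rfl⟩ := hp'
    have := S.delta_len h2
    rw [h1] at this
    simpa using this
  rw [Finset.sum_congr rfl hval, Finset.sum_const, hcard, nsmul_eq_mul]

/-- Exact child count in the intermediate range. -/
lemma children_card (k : ℕ) (hk : 1 ≤ k) (m : ℕ) (hm1 : S.mIdx χ (k - 1) ≤ m)
    (hm2 : m + 1 < S.mIdx χ k) {p : ℝ × ℝ} (hp : p ∈ B.Br m) :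
    (B.children m p).card = Mconst χ := by
  have hplt := B.lt m p hp
  have hE := B.exactM k hk (m + 1) (by omega) hm2 p (by simpa using hp)
  have hseteq : {q ∈ (B.Br (m + 1) : Set (ℝ × ℝ)) |
      Set.Icc q.1 q.2 ⊆ Set.Icc p.1 p.2} = (B.children m p : Set (ℝ × ℝ)) := by
    ext q
    simp only [Set.mem_setOf_eq, Finset.mem_coe, B.mem_children]
    constructor
    · rintro ⟨hq, hsub⟩
      exact ⟨hq, sub_endpoints (B.lt (m + 1) q hq) hsub⟩
    · rintro ⟨hq, h1, h2⟩
      exact ⟨hq, Set.Icc_subset_Icc h1 h2⟩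
  rw [hseteq, Set.ncard_coe_finset] at hE
  exact hE

/-- Per-parent splitting bound in the intermediate range. -/
lemma parent_bound (k : ℕ) (hk : 1 ≤ k) (m : ℕ) (hm1 : S.mIdx χ (k - 1) ≤ m)
    (hm2 : m + 1 < S.mIdx χ k) {p : ℝ × ℝ} (hp : p ∈ B.Br m) :
    p.2 - p.1 ≤ (∑ q ∈ B.children m p, (q.2 - q.1)) +
      ((Mconst χ : ℝ) + 1) * S.alphaHi k := by
  have hplt := B.lt m p hp
  obtain ⟨pst, hpst, hsubst⟩ := B.exists_ancestor hm1 p hp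
  have hpend := sub_endpoints hplt hsubst
  have hpst' : pst ∈ (B.Br (S.mIdx χ (k - 1)) : Set (ℝ × ℝ)) := hpst
  rw [B.levels (k - 1)] at hpst'
  obtain ⟨ω, hωl, hωv, hpsteq⟩ := hpst'
  have hklen : ω.length + 1 = k := by rw [hωl]; omega
  have hbound := len_le_sum (B.children m p) p.1 p.2 (S.alphaHi k) hplt.le
    (S.alphaHi_nonneg hk)
    (fun q hq => B.lt (m + 1) q (B.mem_children.mp hq).1)
    (fun q hq => (B.mem_children.mp hq).2)
    (fun q hq q' hq' h =>
      B.disj (m + 1) q (B.mem_children.mp hq).1 q' (B.mem_children.mp hq').1 h)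
    ?_
  · rwa [B.children_card k hk m hm1 hm2 hp] at hbound
  · -- the avoidance hypothesis
    intro u v hu hv huv hfree
    have hpst1 : pst.1 = S.aStar ω := by rw [hpsteq]
    have hpst2 : pst.2 = S.bStar ω := by rw [hpsteq]
    have hu' : S.aStar ω ≤ u := by rw [← hpst1]; exact le_trans hpend.1 hu
    have hv' : v ≤ S.bStar ω := by rw [← hpst2]; exact le_trans hv hpend.2
    have havoid := S.avoid hωv hu' hv' ?_
    · rwa [hklen] at havoid
    intro l hl1 hl2
    rw [hklen] at hl2
    rw [Set.eq_empty_iff_forall_notMem]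
    rintro x ⟨hx1, hx2⟩
    set ρ := ω ++ [l] with hρdef
    have hρv : ValidWord S.n ρ := validWord_append.mpr ⟨hωv, hl1, by rw [hklen]; exact hl2⟩
    have hρl : ρ.length = k := by rw [hρdef]; simp; omega
    have hρlt : S.aStar ρ < S.bStar ρ := by
      have := S.delta_len hρv
      have := S.delta_pos ρ.length
      linarith
    have hmemk : (S.aStar ρ, S.bStar ρ) ∈ B.Br (S.mIdx χ k) := by
      rw [← Finset.mem_coe, B.levels k]
      exact ⟨ρ, hρl, hρv, rfl⟩
    obtain ⟨q', hq', hsubq'⟩ := B.exists_ancestor (le_of_lt hm2) _ hmemk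
    have hq'lt := B.lt (m + 1) q' hq'
    have hxq' : x ∈ Set.Ioo q'.1 q'.2 := by
      have hsub2 : Set.Ioo (S.aStar ρ) (S.bStar ρ) ⊆ Set.Ioo q'.1 q'.2 :=
        Ioo_subset_Ioo_of_Icc hsubq'
      exact hsub2 hx2
    obtain ⟨p'', hp'', hsubp''⟩ := B.nested m q' hq'
    by_cases hpp : p'' = p
    · subst hpp
      have hch : q' ∈ B.children m p'' :=
        B.mem_children.mpr ⟨hq', sub_endpoints hq'lt hsubp''⟩
      have := hfree q' hch
      rw [Set.eq_empty_iff_forall_notMem] at this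
      exact this x ⟨hx1, hxq'⟩
    · have hdis := B.disj m p'' hp'' p hp hpp
      have hx_p'' : x ∈ Set.Ioo p''.1 p''.2 := Ioo_subset_Ioo_of_Icc hsubp'' hxq'
      have hx_p : x ∈ Set.Ioo p.1 p.2 := Set.Ioo_subset_Ioo hu hv hx1
      rw [Set.eq_empty_iff_forall_notMem] at hdis
      exact hdis x ⟨hx_p'', hx_p⟩

/-- Iterated lower bound on `l(H_m)` in the intermediate range. -/
lemma len_lower (k : ℕ) (hk : 1 ≤ k) :
    ∀ m, S.mIdx χ (k - 1) ≤ m → m < S.mIdx χ k →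
      (B.Br m).card = Mconst χ ^ (m - S.mIdx χ (k - 1)) * S.Nstar (k - 1) ∧
      (S.Nstar (k - 1) : ℝ) * S.delta (k - 1) -
          ((Mconst χ : ℝ) + 1) * S.alphaHi k * (S.Nstar (k - 1) : ℝ) *
            (∑ t ∈ Finset.range (m - S.mIdx χ (k - 1)), (Mconst χ : ℝ) ^ t) ≤
        B.len m := by
  intro m hm
  induction m, hm using Nat.le_induction with
  | base =>
    intro _
    obtain ⟨hlen, hcard⟩ := B.len_level (k - 1)
    constructor
    · simpa using hcard
    · simp only [Nat.sub_self, Finset.range_zero, Finset.sum_empty, mul_zero, sub_zero]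
      exact le_of_eq hlen.symm
  | succ m hm ih =>
    intro hlt
    have hmk : m < S.mIdx χ k := by omega
    obtain ⟨hcard, hlen⟩ := ih hmk
    set r := m - S.mIdx χ (k - 1) with hrdef
    have hr1 : m + 1 - S.mIdx χ (k - 1) = r + 1 := by omega
    -- step: each branch of H_m has exactly M children
    have hstep_card : (B.Br (m + 1)).card = Mconst χ * (B.Br m).card := by
      rw [B.card_succ m,
        Finset.sum_congr rfl (fun p hp => B.children_card k hk m hm hlt hp),
        Finset.sum_const, smul_eq_mul, mul_comm]
    have hstep_len : B.len m - ((B.Br m).card : ℝ) *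
        (((Mconst χ : ℝ) + 1) * S.alphaHi k) ≤ B.len (m + 1) := by
      rw [B.len_succ m]
      have h1 : ∀ p ∈ B.Br m,
          p.2 - p.1 - ((Mconst χ : ℝ) + 1) * S.alphaHi k ≤
            ∑ q ∈ B.children m p, (q.2 - q.1) := by
        intro p hp
        have := B.parent_bound k hk m hm hlt hp
        linarith
      have h2 := Finset.sum_le_sum h1
      rw [Finset.sum_sub_distrib, Finset.sum_const, nsmul_eq_mul] at h2
      rw [len]
      linarith
    constructor
    · rw [hstep_card, hcard, hr1, pow_succ]; ring
    · have hcast : ((B.Br m).card : ℝ) = (Mconst χ : ℝ) ^ r * (S.Nstar (k - 1) : ℝ) := by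
        rw [hcard]; push_cast; ring
      rw [hr1, Finset.sum_range_succ]
      rw [hcast] at hstep_len
      have hα := S.alphaHi_nonneg hk
      nlinarith [hstep_len, hlen]

end BranchSeq

/-- The numeric estimate combining the geometric series with the gap comparison. -/
lemma final_numeric (M n i r : ℕ) (hM : 3 ≤ M) (hi : 2 ≤ i) (hr : r ≤ i - 1)
    (hn : M ^ i ≤ n) (A δ χ : ℝ) (hA : 0 ≤ A) (hδ : 0 < δ) (hχ : 1 ≤ χ)
    (hAδ : ((n - 1 : ℕ) : ℝ) * A ≤ χ * δ) :
    ((M : ℝ) + 1) * A * (∑ t ∈ Finset.range r, (M : ℝ) ^ t) ≤ 2 * χ / (M : ℝ) * δ := by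
  have hM0 : (0:ℝ) < (M : ℝ) := by positivity
  have hM3 : (3:ℝ) ≤ (M : ℝ) := by exact_mod_cast hM
  have hsum_le : (∑ t ∈ Finset.range r, (M : ℝ) ^ t) ≤
      ∑ t ∈ Finset.range (i - 1), (M : ℝ) ^ t :=
    Finset.sum_le_sum_of_subset_of_nonneg (Finset.range_subset_range.mpr hr)
      (fun t _ _ => by positivity)
  have hgeom : (∑ t ∈ Finset.range (i - 1), (M : ℝ) ^ t) * ((M : ℝ) - 1) =
      (M : ℝ) ^ (i - 1) - 1 := geom_sum_mul _ _
  set x := (M : ℝ) ^ (i - 1) with hxdef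
  have hx : (M : ℝ) ≤ x := by
    rw [hxdef]
    calc (M : ℝ) = (M : ℝ) ^ 1 := (pow_one _).symm
    _ ≤ (M : ℝ) ^ (i - 1) := pow_le_pow_right₀ (by linarith) (by omega)
  have hxM : (M : ℝ) * x = (M : ℝ) ^ i := by
    rw [hxdef, ← pow_succ', Nat.sub_add_cancel (by omega : 1 ≤ i)]
  have hMn : (M : ℝ) ^ i ≤ (n : ℝ) := by exact_mod_cast hn
  have hn1 : ((n - 1 : ℕ) : ℝ) = (n : ℝ) - 1 := by
    have h1 : (1:ℕ) ≤ n := le_trans (Nat.one_le_two_pow.trans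
      (Nat.pow_le_pow_left (by omega) i)) hn
    rw [Nat.cast_sub h1]; norm_num
  set G := ∑ t ∈ Finset.range r, (M : ℝ) ^ t with hGdef
  have hG0 : 0 ≤ G := Finset.sum_nonneg fun t _ => by positivity
  have hGi : G * ((M : ℝ) - 1) ≤ x - 1 := by
    rw [← hgeom]
    exact mul_le_mul_of_nonneg_right hsum_le (by linarith)
  -- main chain after multiplying by M (M - 1) > 0
  rw [div_mul_eq_mul_div, le_div_iff₀ hM0]
  have key : ((M : ℝ) + 1) * A * G * (M : ℝ) * ((M : ℝ) - 1) ≤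
      2 * χ * δ * ((M : ℝ) - 1) := by
    have c1 : ((M : ℝ) + 1) * A * G * (M : ℝ) * ((M : ℝ) - 1) =
        (M : ℝ) * ((M : ℝ) + 1) * A * (G * ((M : ℝ) - 1)) := by ring
    have c2 : (M : ℝ) * ((M : ℝ) + 1) * A * (G * ((M : ℝ) - 1)) ≤
        (M : ℝ) * ((M : ℝ) + 1) * A * (x - 1) := by
      have : (0:ℝ) ≤ (M : ℝ) * ((M : ℝ) + 1) * A := by positivity
      exact mul_le_mul_of_nonneg_left hGi this
    have c3 : (M : ℝ) * ((M : ℝ) + 1) * A * (x - 1) ≤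
        2 * ((M : ℝ) - 1) * ((M : ℝ) * x - 1) * A := by
      have hx0 : (0:ℝ) ≤ x := by linarith
      have h30 : (0:ℝ) ≤ (M : ℝ) - 3 := by linarith
      have t1 : (0:ℝ) ≤ A * ((M : ℝ) * x) * ((M : ℝ) - 3) :=
        mul_nonneg (mul_nonneg hA (mul_nonneg hM0.le hx0)) h30
      have t2 : (0:ℝ) ≤ A * ((M : ℝ) * (M : ℝ) - (M : ℝ) + 2) :=
        mul_nonneg hA (by nlinarith)
      nlinarith [t1, t2]
    have c4 : 2 * ((M : ℝ) - 1) * ((M : ℝ) * x - 1) * A ≤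
        2 * ((M : ℝ) - 1) * (((n : ℝ) - 1)) * A := by
      have h1 : (M : ℝ) * x - 1 ≤ (n : ℝ) - 1 := by rw [hxM]; linarith
      have h2 : (0:ℝ) ≤ 2 * ((M : ℝ) - 1) := by linarith
      have t := mul_nonneg (mul_nonneg h2 hA) (sub_nonneg.mpr h1)
      nlinarith [t]
    have c5 : 2 * ((M : ℝ) - 1) * (((n : ℝ) - 1)) * A ≤ 2 * χ * δ * ((M : ℝ) - 1) := by
      rw [hn1] at hAδ
      nlinarith
    linarith [c2, c3, c4, c5, c1.le, c1.ge]
  have hpos : (0:ℝ) < (M : ℝ) - 1 := by linarith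
  exact le_of_mul_le_mul_right key hpos

end BranchLemmas

/-- **Lemma 4.2.** For the sequence `{H_m}` of Lemma 4.1: `l(H_{m_k}) = N_k* δ_k*`, and
`(1 - 2χ/M) N_{k-1}* δ_{k-1}* ≤ l(H_m) ≤ N_{k-1}* δ_{k-1}*` for `m_{k-1} < m < m_k`. -/
theorem length_of_Hm
    (S : HPS) (χ : ℝ) (hχ : 1 ≤ χ) (hgap : GapComparable S χ)
    (B : BranchSeq S χ) :
    ∀ k, 1 ≤ k →
      B.len (S.mIdx χ k) = (S.Nstar k : ℝ) * S.deltaStar k ∧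
      ∀ m, S.mIdx χ (k - 1) < m → m < S.mIdx χ k →
        (1 - 2 * χ / (Mconst χ : ℝ)) * ((S.Nstar (k - 1) : ℝ) * S.deltaStar (k - 1)) ≤
            B.len m ∧
          B.len m ≤ (S.Nstar (k - 1) : ℝ) * S.deltaStar (k - 1) := by
  intro k hk
  obtain ⟨hlevel, _⟩ := B.len_level (S := S) (χ := χ) k
  refine ⟨by rw [hlevel, S.deltaStar_eq], ?_⟩
  intro m hm1 hm2
  have hkm1 : S.mIdx χ (k - 1) ≤ m := hm1.le
  obtain ⟨hlen0, hcard0⟩ := B.len_level (k - 1)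
  constructor
  · -- lower bound
    have hM3 : 3 ≤ Mconst χ := by
      have h2 : (2:ℕ) ≤ ⌊2 * χ⌋₊ := Nat.le_floor (by push_cast; linarith)
      unfold Mconst; omega
    have hklen : S.mIdx χ k = S.mIdx χ (k - 1) + S.ik χ k := by
      conv_lhs => rw [show k = (k - 1) + 1 by omega]
      rw [HPS.mIdx, HPS.mIdx, Finset.sum_Icc_succ_top (by omega : 1 ≤ (k - 1) + 1)]
      rw [show (k - 1) + 1 = k by omega]
    have hik2 : 2 ≤ S.ik χ k := by omega
    have hlog : S.ik χ k = Nat.log (Mconst χ) (S.n k) := by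
      unfold HPS.ik at hik2 ⊢; omega
    have hpow : Mconst χ ^ (S.ik χ k) ≤ S.n k := by
      rw [hlog]; exact Nat.pow_log_le_self _ (by have := S.hn k hk; omega)
    obtain ⟨hcard, hlen⟩ := B.len_lower k hk m hkm1 hm2
    have hnum := final_numeric (Mconst χ) (S.n k) (S.ik χ k) (m - S.mIdx χ (k - 1))
      hM3 hik2 (by omega) hpow (S.alphaHi k) (S.delta (k - 1)) χ
      (S.alphaHi_nonneg hk) (S.delta_pos (k - 1)) hχ (S.alphaHi_card_le hχ hgap hk)
    rw [S.deltaStar_eq]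
    have hN0 : (0:ℝ) ≤ (S.Nstar (k - 1) : ℝ) := Nat.cast_nonneg _
    have hkey := mul_le_mul_of_nonneg_left hnum hN0
    nlinarith [hlen, hkey]
  · rw [S.deltaStar_eq, ← hlen0]
    exact B.len_mono hkm1
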